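/- arXiv:math/9803091 — 5 statements merged into one kernel-verified Lean document; each statement's English description precedes it below -/
import Mathlib

section
/- Schur's lemma for the Fock representation: every ℚ-linear endomorphism T of R that commutes with multiplication by q_m for every m ≥ 1 and commutes with the partial derivative ∂/∂q_m for every m ≥ 1 is a scalar multiple of the identity, i.e. there exists c ∈ ℚ with T = c·id_R. -/
/-! Since `T` commutes with multiplication by every variable, `T p = p · T 1`. Moreover
`∂/∂qₘ (T 1) = T (∂/∂qₘ 1) = 0` for every `m`, and in characteristic zero a polynomial killed
by every partial derivative is constant, so `T 1 = c`. -/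

open MvPolynomial

namespace MvPolynomial

variable {σ R : Type*}

theorem coeff_add_single_one_eq_zero_of_pderiv_eq_zero [CommSemiring R] [NoZeroDivisors R]
    [CharZero R] {p : MvPolynomial σ R} {i : σ} (h : pderiv i p = 0) (m : σ →₀ ℕ) :
    coeff (m + Finsupp.single i 1) p = 0 := by
  have hcoeff := coeff_pderiv (i := i) p m
  rw [h, coeff_zero, eq_comm, mul_eq_zero] at hcoeff
  exact hcoeff.resolve_right (by exact_mod_cast Nat.succ_ne_zero (m i))

theorem eq_C_coeff_zero_of_forall_pderiv_eq_zero [CommSemiring R] [NoZeroDivisors R]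
    [CharZero R] {p : MvPolynomial σ R} (h : ∀ i, pderiv i p = 0) :
    p = C (coeff 0 p) := by
  classical
  ext s
  rcases eq_or_ne s 0 with rfl | hs
  · simp
  obtain ⟨i, hi⟩ : ∃ i, s i ≠ 0 := by simpa [Finsupp.ext_iff] using hs
  rw [coeff_C, if_neg (Ne.symm hs), ← Finsupp.sub_add_single_one_cancel hi]
  exact coeff_add_single_one_eq_zero_of_pderiv_eq_zero (h i) _

theorem apply_eq_mul_apply_one_of_map_X_mul [CommSemiring R]
    (T : MvPolynomial σ R →ₗ[R] MvPolynomial σ R)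
    (hmul : ∀ i p, T (X i * p) = X i * T p) (p : MvPolynomial σ R) :
    T p = p * T 1 := by
  induction p using MvPolynomial.induction_on with
  | C a => rw [C_eq_smul_one, map_smul, smul_one_mul]
  | add p q hp hq => rw [map_add, hp, hq, add_mul]
  | mul_X p i hp => rw [mul_comm, hmul, hp, mul_assoc]

end MvPolynomial

theorem schur_fock (T : MvPolynomial ℕ+ ℚ →ₗ[ℚ] MvPolynomial ℕ+ ℚ)
    (hmul : ∀ (m : ℕ+) (p : MvPolynomial ℕ+ ℚ), T (X m * p) = X m * T p)
    (hder : ∀ (m : ℕ+) (p : MvPolynomial ℕ+ ℚ), T (pderiv m p) = pderiv m (T p)) :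
    ∃ c : ℚ, T = c • LinearMap.id := by
  obtain ⟨c, hT1⟩ : ∃ c, T 1 = C c :=
    ⟨_, eq_C_coeff_zero_of_forall_pderiv_eq_zero fun m => by rw [← hder, pderiv_one, map_zero]⟩
  refine ⟨c, LinearMap.ext fun p => ?_⟩
  rw [apply_eq_mul_apply_one_of_map_X_mul T hmul p, hT1, LinearMap.smul_apply,
    LinearMap.id_apply, smul_eq_C_mul, mul_comm]
end

section
/- Irreducibility of the Fock representation: if V ⊆ R is a nonzero ℚ-linear subspace that is stable under multiplication by q_m for every m ≥ 1 and stable under the partial derivative ∂/∂q_m for every m ≥ 1, then V = R; in particular R is generated from the vacuum vector 1 by the multiplication operators. -/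
/-! Differentiating a nonzero element of `V` lowers its total degree, and in characteristic zero
some partial derivative of a nonconstant polynomial is nonzero; so `V` contains a nonzero constant,
hence `1`. From `1` the multiplication operators generate every monomial. -/

open MvPolynomial

namespace MvPolynomial

variable {σ R : Type*}

section CommSemiring

variable [CommSemiring R]

theorem totalDegree_pderiv_le (i : σ) (p : MvPolynomial σ R) :
    (pderiv i p).totalDegree ≤ p.totalDegree - 1 := by
  refine Finset.sup_le fun u hu => ?_
  rw [mem_support_iff, coeff_pderiv] at hu
  have hdeg := le_totalDegree (mem_support_iff.mpr (left_ne_zero_of_mul hu))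
  rw [Finsupp.sum_add_index' (fun _ => rfl) (fun _ _ _ => rfl), Finsupp.sum_single_index rfl] at hdeg
  omega

theorem exists_coeff_ne_zero_of_totalDegree_ne_zero {p : MvPolynomial σ R}
    (hp : p.totalDegree ≠ 0) : ∃ d ≠ 0, coeff d p ≠ 0 := by
  classical
  have hne : p ≠ C (coeff 0 p) := mt totalDegree_eq_zero_iff_eq_C.mpr hp
  obtain ⟨d, hd⟩ := not_forall.mp (mt (MvPolynomial.ext _ _) hne)
  by_cases h0 : d = 0
  · subst h0; simp at hd
  · exact ⟨d, h0, by simpa [coeff_C, Ne.symm h0] using hd⟩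

theorem exists_pderiv_ne_zero [NoZeroDivisors R] [CharZero R] {p : MvPolynomial σ R}
    (hp : p.totalDegree ≠ 0) : ∃ i, pderiv i p ≠ 0 := by
  obtain ⟨d, hd0, hd⟩ := exists_coeff_ne_zero_of_totalDegree_ne_zero hp
  obtain ⟨i, hi⟩ := Finsupp.ne_iff.mp hd0
  refine ⟨i, fun h => ?_⟩
  have := congrArg (coeff (d - Finsupp.single i 1)) h
  rw [coeff_pderiv, Finsupp.sub_add_single_one_cancel hi, coeff_zero] at this
  exact mul_ne_zero hd (Nat.cast_add_one_ne_zero _) this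

theorem submodule_eq_top_of_one_mem_of_X_mul_mem (V : Submodule R (MvPolynomial σ R))
    (h1 : 1 ∈ V) (hX : ∀ i, ∀ p ∈ V, X i * p ∈ V) : V = ⊤ := by
  refine Submodule.eq_top_iff'.mpr fun p => ?_
  induction p using MvPolynomial.induction_on with
  | C a => simpa [smul_eq_C_mul] using V.smul_mem a h1
  | add p q hp hq => exact V.add_mem hp hq
  | mul_X p i hp => simpa [mul_comm] using hX i p hp

end CommSemiring

theorem one_mem_of_pderiv_mem {K : Type*} [Field K] [CharZero K]
    (V : Submodule K (MvPolynomial σ K)) (hV : V ≠ ⊥)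
    (hder : ∀ i, ∀ p ∈ V, pderiv i p ∈ V) : 1 ∈ V := by
  obtain ⟨p, hpV, hp0⟩ := Submodule.exists_mem_ne_zero_of_ne_bot hV
  induction hn : p.totalDegree using Nat.strong_induction_on generalizing p with
  | _ n ih =>
    by_cases hdeg : p.totalDegree = 0
    · obtain ⟨c, rfl⟩ : ∃ c, p = C c := ⟨_, totalDegree_eq_zero_iff_eq_C.mp hdeg⟩
      have hc : c ≠ 0 := by rintro rfl; simp at hp0
      simpa [smul_eq_C_mul, ← map_mul, hc] using V.smul_mem c⁻¹ hpV
    · obtain ⟨i, hi⟩ := exists_pderiv_ne_zero hdeg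
      have hlt := totalDegree_pderiv_le i p
      exact ih _ (by omega) _ (hder i p hpV) hi rfl

end MvPolynomial

theorem fock_irreducible (V : Submodule ℚ (MvPolynomial ℕ+ ℚ)) (hV : V ≠ ⊥)
    (hmul : ∀ (m : ℕ+), ∀ p ∈ V, X m * p ∈ V)
    (hder : ∀ (m : ℕ+), ∀ p ∈ V, pderiv m p ∈ V) :
    V = ⊤ :=
  submodule_eq_top_of_one_mem_of_X_mul_mem V (one_mem_of_pderiv_mem V hV hder) hmul
end

section
/- Virasoro–Heisenberg commutation (Fock-space form of Theorem: [𝔏_n(α),𝔮_m(β)] = −m·𝔮_{n+m}(αβ)): for all integers n and m, L_n ∘ a_m − a_m ∘ L_n = −m · a_{n+m}. -/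
/- Fock space model: `R = ℚ[q₁,q₂,…]` with oscillator operators `aₙ`
(`aₙ = qₙ·` for `n > 0`, `aₙ = −∂₋ₙ`, `a₀ = 0`) and Virasoro operators
`Lₙ = (1/2)·Σ_{i+j=n, i,j≥1} aᵢ∘aⱼ + Σ_{k≥1} a_{n+k}∘a_{−k}` for `n > 0`,
`Lₙ = (1/2)·Σ_{i+j=−n, i,j≥1} a_{−i}∘a_{−j} + Σ_{k≥1} a_k∘a_{n−k}` for `n < 0`,
`L₀ = Σ_{k≥1} a_k∘a_{−k}`; the locally finite sums over `k` are realized by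
truncating at a bound beyond which all summands vanish on the given polynomial. -/

open MvPolynomial

noncomputable section

abbrev R : Type := MvPolynomial ℕ+ ℚ

/-- The variable `q_k` (zero for `k = 0`). -/
def q (k : ℕ) : R := if h : 0 < k then X (⟨k, h⟩ : ℕ+) else 0

/-- Multiplication by `q_k` as a `ℚ`-linear operator. -/
def mulQ (k : ℕ) : Module.End ℚ R := LinearMap.mulLeft ℚ (q k)

/-- The operator `∂ₘ = m·(∂/∂qₘ)`. -/
def pd (m : ℕ) : Module.End ℚ R :=
  if h : 0 < m then (m : ℚ) • (pderiv (⟨m, h⟩ : ℕ+)).toLinearMap else 0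

/-- The oscillator operators. -/
def a : ℤ → Module.End ℚ R := fun n =>
  if 0 < n then mulQ n.toNat
  else if n < 0 then -pd (-n).toNat
  else 0

/-- A bound on the indices of variables occurring in `p`; any annihilation
operator `a₋ₖ` with `k` beyond this bound kills `p`. -/
def bnd (p : R) : ℕ := p.vars.sup (fun i => (i : ℕ))

/-- The Virasoro operators `Lₙ`. -/
def L (n : ℤ) : R → R := fun p =>
  if 0 < n then
    (1 / 2 : ℚ) • (∑ i ∈ Finset.Ioo (0 : ℤ) n, (a i * a (n - i)) p)
      + ∑ k ∈ Finset.Icc 1 (bnd p), (a (n + (k : ℤ)) * a (-(k : ℤ))) p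
  else if n < 0 then
    (1 / 2 : ℚ) • (∑ i ∈ Finset.Ioo (0 : ℤ) (-n), (a (-i) * a (n + i)) p)
      + ∑ k ∈ Finset.Icc 1 (bnd p), (a (k : ℤ) * a (n - (k : ℤ))) p
  else ∑ k ∈ Finset.Icc 1 (bnd p), (a (k : ℤ) * a (-(k : ℤ))) p

/-! The Heisenberg relations `aᵢ aⱼ = aⱼ aᵢ + i δ_{i+j,0}` give, for every quadratic term,
`[aᵢ a_{n-i}, a_m] = -m (δ_{i,-m} + δ_{i,n+m}) a_{n+m}`. On a fixed polynomial `Lₙ` agrees with a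
finite sum of such terms, `aᵢ a_{n-i}` with `i` running over two integer intervals (the first with
weight `1/2`), and `-m`, `n + m` together land in these intervals with total weight exactly `1`. -/

theorem MvPolynomial.pderiv_pderiv_comm {σ S : Type*} [CommRing S] (i j : σ)
    (p : MvPolynomial σ S) : pderiv i (pderiv j p) = pderiv j (pderiv i p) := by
  have h : ⁅(pderiv i : Derivation S (MvPolynomial σ S) (MvPolynomial σ S)), pderiv j⁆ = 0 :=
    derivation_ext fun k => by
      classical
      rw [Derivation.commutator_apply, pderiv_X, pderiv_X, Pi.single_apply, Pi.single_apply]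
      split_ifs <;> simp
  rw [← sub_eq_zero, ← Derivation.commutator_apply, h, Derivation.zero_apply]

theorem Finset.sum_Icc_one_natCast_add {M : Type*} [AddCommMonoid M] (c : ℤ) (N : ℕ)
    (f : ℤ → M) : ∑ k ∈ Icc 1 N, f (c + k) = ∑ i ∈ Icc (c + 1) (c + N), f i :=
  sum_nbij' (fun k => c + k) (fun i => (i - c).toNat) (by simp) (by simp; omega)
    (by simp) (by simp; omega) fun _ _ => rfl

theorem Finset.sum_Ioo_neg {α M : Type*} [AddCommGroup α] [LinearOrder α] [IsOrderedAddMonoid α]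
    [LocallyFiniteOrder α] [AddCommMonoid M] (a b : α) (f : α → M) :
    ∑ i ∈ Ioo a b, f (-i) = ∑ i ∈ Ioo (-b) (-a), f i :=
  sum_nbij' (-·) (-·) (by simp [and_comm]) (by simp [neg_lt, lt_neg, and_comm]) (by simp)
    (by simp) fun _ _ => rfl

theorem mulQ_zero : mulQ 0 = 0 := by ext; simp [mulQ, q]

theorem mulQ_pnat_apply (k : ℕ+) (p : R) : mulQ k p = X k * p := by
  simp only [mulQ, q, dif_pos k.pos, LinearMap.mulLeft_apply]
  rfl

theorem pd_zero : pd 0 = 0 := by simp [pd]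

theorem pd_pnat_apply (k : ℕ+) (p : R) : pd k p = (k : ℚ) • pderiv k p := by
  simp [pd]
  rfl

theorem a_natCast (k : ℕ) : a k = mulQ k := by
  rcases Nat.eq_zero_or_pos k with rfl | hk
  · simp [a, mulQ_zero]
  · simp [a, hk]

theorem a_neg_natCast_apply (k : ℕ) (p : R) : a (-k) p = -pd k p := by
  rcases Nat.eq_zero_or_pos k with rfl | hk
  · simp [a, pd_zero]
  · simp [a, hk, show ¬(k : ℤ) < 0 by omega]

theorem a_zero_apply (p : R) : a 0 p = 0 := by simp [a]

theorem mulQ_mulQ_comm (i j : ℕ) (p : R) : mulQ i (mulQ j p) = mulQ j (mulQ i p) := by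
  simp only [mulQ, LinearMap.mulLeft_apply, mul_left_comm]

theorem pd_pd_comm (i j : ℕ) (p : R) : pd i (pd j p) = pd j (pd i p) := by
  rcases i.eq_zero_or_pos with rfl | hi
  · simp [pd_zero]
  rcases j.eq_zero_or_pos with rfl | hj
  · simp [pd_zero]
  lift i to ℕ+ using hi
  lift j to ℕ+ using hj
  simp [pd_pnat_apply, pderiv_pderiv_comm i j, smul_smul, mul_comm]

theorem pd_mulQ_apply (k i : ℕ) (p : R) :
    pd k (mulQ i p) = mulQ i (pd k p) + if i = k then (k : ℚ) • p else 0 := by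
  rcases k.eq_zero_or_pos with rfl | hk
  · simp [pd_zero]
  rcases i.eq_zero_or_pos with rfl | hi
  · simp [mulQ_zero, hk.ne]
  lift i to ℕ+ using hi
  lift k to ℕ+ using hk
  by_cases h : i = k
  · subst h; simp [pd_pnat_apply, mulQ_pnat_apply, Derivation.leibniz, add_comm]
  · simp [pd_pnat_apply, mulQ_pnat_apply, Derivation.leibniz, pderiv_X, h, PNat.coe_inj]

theorem a_apply_a_comm (i j : ℤ) (p : R) :
    a i (a j p) = a j (a i p) + if i + j = 0 then (i : ℚ) • p else 0 := by
  obtain ⟨k, rfl | rfl⟩ := Int.eq_nat_or_neg i <;> obtain ⟨l, rfl | rfl⟩ := Int.eq_nat_or_neg j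
  · rw [a_natCast, a_natCast, mulQ_mulQ_comm]
    split_ifs with h
    · simp [show k = 0 by omega]
    · rw [add_zero]
  · simp only [a_natCast, a_neg_natCast_apply, map_neg, pd_mulQ_apply, Int.add_neg_eq_sub,
      sub_eq_zero, Nat.cast_inj, Int.cast_natCast]
    split_ifs with h
    · subst h; abel
    · simp
  · simp only [a_natCast, a_neg_natCast_apply, map_neg, pd_mulQ_apply, neg_add_eq_zero,
      Nat.cast_inj, Int.cast_neg, Int.cast_natCast, neg_smul]
    rcases eq_or_ne k l with rfl | h
    · simp only [if_true]; abel
    · simp [h, h.symm]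
  · simp only [a_neg_natCast_apply, map_neg, neg_neg, pd_pd_comm k l]
    split_ifs with h
    · simp [show k = 0 by omega]
    · rw [add_zero]

theorem a_apply_a_apply_a_sub (i j m : ℤ) (p : R) :
    a i (a j (a m p)) - a m (a i (a j p))
      = (((if i = -m then 1 else 0) + (if j = -m then 1 else 0)) * -(m : ℚ)) • a (i + j + m) p := by
  rw [a_apply_a_comm j m, map_add, a_apply_a_comm i m]
  simp only [add_eq_zero_iff_eq_neg]
  by_cases hi : i = -m <;> by_cases hj : j = -m
  · subst hi hj; simp; module
  · subst hi; simp [hj]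
  · subst hj; simp [hi]
  · simp [hi, hj]

theorem sum_a_apply_a_sub (I : Finset ℤ) (n m : ℤ) (p : R) :
    ∑ i ∈ I, a i (a (n - i) (a m p)) - a m (∑ i ∈ I, a i (a (n - i) p))
      = (((if -m ∈ I then 1 else 0) + (if n + m ∈ I then 1 else 0)) * -(m : ℚ)) • a (n + m) p := by
  have hcond (i : ℤ) : n - i = -m ↔ i = n + m := by omega
  simp only [map_sum, ← Finset.sum_sub_distrib, a_apply_a_apply_a_sub, add_sub_cancel, hcond]
  rw [← Finset.sum_smul, ← Finset.sum_mul, Finset.sum_add_distrib, Finset.sum_ite_eq',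
    Finset.sum_ite_eq']

/-- `L n` with the annihilation sum cut off at `N`; all three cases of `L` are written at once as
sums of `aᵢ a_{n-i}`. -/
def virasoroTrunc (n : ℤ) (N : ℕ) (p : R) : R :=
  (1 / 2 : ℚ) • ∑ i ∈ Finset.Ioo (min n 0) (max n 0), a i (a (n - i) p)
    + ∑ i ∈ Finset.Icc (max n 0 + 1) (max n 0 + N), a i (a (n - i) p)

theorem virasoroTrunc_a_sub (n m : ℤ) (N : ℕ) (hm : m.natAbs ≤ N) (hnm : (n + m).natAbs ≤ N)
    (p : R) : virasoroTrunc n N (a m p) - a m (virasoroTrunc n N p) = (-(m : ℚ)) • a (n + m) p := by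
  rw [virasoroTrunc, virasoroTrunc, map_add, map_smul, add_sub_add_comm, ← smul_sub,
    sum_a_apply_a_sub, sum_a_apply_a_sub, smul_smul, ← add_smul]
  rcases eq_or_ne m 0 with rfl | hm0
  · simp
  rcases eq_or_ne (n + m) 0 with hnm0 | hnm0
  · simp [hnm0, a_zero_apply]
  congr 1
  -- `i ↦ n - i` maps `Ioo (min n 0) (max n 0)` onto itself and swaps `-m` and `n + m`: either
  -- both lie in it, or exactly one of them lies in `Icc (max n 0 + 1) (max n 0 + N)`.
  simp only [Finset.mem_Ioo, Finset.mem_Icc]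
  split_ifs <;> first | omega | ring

theorem a_neg_natCast_apply_of_bnd_lt {k : ℕ} {p : R} (h : bnd p < k) : a (-k) p = 0 := by
  have hk : 0 < k := by omega
  lift k to ℕ+ using hk
  have hv : k ∉ p.vars := fun hk => by
    have := Finset.le_sup (f := fun i : ℕ+ => (i : ℕ)) hk
    exact absurd this (by unfold bnd at h; omega)
  rw [a_neg_natCast_apply, pd_pnat_apply, pderiv_eq_zero_of_notMem_vars hv, smul_zero, neg_zero]

theorem virasoroTrunc_eq_of_bnd_le (n : ℤ) {N : ℕ} {p : R} (h : bnd p ≤ N) :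
    virasoroTrunc n N p = virasoroTrunc n (bnd p) p := by
  rw [virasoroTrunc, virasoroTrunc, add_right_inj]
  refine (Finset.sum_subset (Finset.Icc_subset_Icc_right (by omega)) fun i hi hi' => ?_).symm
  simp only [Finset.mem_Icc] at hi hi'
  obtain ⟨k, hk⟩ : ∃ k : ℕ, n - i = -k := ⟨(i - n).toNat, by omega⟩
  rw [hk, a_neg_natCast_apply_of_bnd_lt (by omega), map_zero]

theorem L_eq_virasoroTrunc_bnd (n : ℤ) (p : R) : L n p = virasoroTrunc n (bnd p) p := by
  have hIcc (c : ℤ) := Finset.sum_Icc_one_natCast_add c (bnd p) fun i => a i (a (n - i) p)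
  rcases lt_trichotomy n 0 with hn | rfl | hn
  · have hIoo := Finset.sum_Ioo_neg 0 (-n) fun i => a i (a (n - i) p)
    have hIcc := hIcc 0
    simp only [neg_neg, neg_zero, sub_neg_eq_add] at hIoo
    simp only [zero_add] at hIcc
    rw [L, if_neg hn.not_gt, if_pos hn, virasoroTrunc, min_eq_left hn.le, max_eq_right hn.le,
      ← hIoo, zero_add, zero_add, ← hIcc]
    rfl
  · simpa [L, virasoroTrunc] using hIcc 0
  · have hIcc := hIcc n
    simp only [sub_add_cancel_left] at hIcc
    rw [L, if_pos hn, virasoroTrunc, min_eq_right hn.le, max_eq_left hn.le, ← hIcc]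
    rfl

theorem L_apply_eq_virasoroTrunc (n : ℤ) {N : ℕ} {p : R} (h : bnd p ≤ N) :
    L n p = virasoroTrunc n N p :=
  (L_eq_virasoroTrunc_bnd n p).trans (virasoroTrunc_eq_of_bnd_le n h).symm

/-- Virasoro–Heisenberg commutation: `[Lₙ, aₘ] = −m·a_{n+m}`. -/
theorem virasoro_heisenberg (n m : ℤ) (p : R) :
    L n (a m p) - a m (L n p) = (-(m : ℚ)) • a (n + m) p := by
  set N := bnd p + bnd (a m p) + m.natAbs + (n + m).natAbs
  rw [L_apply_eq_virasoroTrunc n (N := N) (by omega),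
    L_apply_eq_virasoroTrunc n (N := N) (by omega)]
  exact virasoroTrunc_a_sub n m N (by omega) (by omega) p

end
end

section
/- Fock-space form of Göttsche's formula Σ_n c(L^{[n]}) = exp(Σ_{m≥1} ((−1)^{m−1}/m)·𝔮_m(c(L)))·1: let M₁ : R → R be multiplication by q_1 and D_{1,1} := Σ_{k ≥ 1} (multiplication by q_{1+k}) ∘ ∂_k. Then for every n ≥ 0, (M₁ − D_{1,1})^n applied to the constant polynomial 1 equals n! · Σ_λ ( Π_{i ≥ 1} (1/λ_i!) · ((−1)^{i−1}/i)^{λ_i} ) · Π_{i ≥ 1} q_i^{λ_i}, where the sum runs over all finitely supported λ : {1,2,…} → ℕ with Σ_i i·λ_i = n. -/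
/- Fock space model of Göttsche's formula for the Chern classes of
tautological bundles attached to a line bundle: with `M₁` = multiplication by
`q₁` and `D_{1,1} = Σ_{k≥1} q_{1+k}·∂ₖ` (where `∂ₖ = k·∂/∂qₖ`; the locally
finite sum is realized by truncation), one has
`(M₁ − D_{1,1})ⁿ 1 = n!·Σ_λ (Π_i (1/λᵢ!)·((−1)^{i−1}/i)^{λᵢ})·Π_i qᵢ^{λᵢ}`,
the sum being over all partitions `λ` of `n` (encoded as `Nat.Partition n`,
with `λᵢ` the number of parts equal to `i`). -/

open MvPolynomial

noncomputable section

/-- The operator `D_{n,ν} = Σ_{n₁,…,n_ν ≥ 1} q_{n+n₁+⋯+n_ν}·∂_{n₁}⋯∂_{n_ν}`. -/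
def D (n ν : ℕ) : R → R := fun p =>
  ∑ t ∈ Fintype.piFinset (fun _ : Fin ν => Finset.Icc 1 (bnd p)),
    (mulQ (n + ∑ i, t i) * (List.ofFn fun i => pd (t i)).prod) p

/-! With `S = ∑ₘ logCoeff m · qₘ zᵐ`, the polynomial `goettschePoly n` is the `zⁿ`-coefficient of
`exp S`. Since `D_{1,1}` is a derivation, `(q₁ − D_{1,1}) exp S = (q₁ − D_{1,1} S) exp S`, and the
relation `(k + 1) · logCoeff (k + 1) = −k · logCoeff k` makes `q₁ − D_{1,1} S = ∂S/∂z`. Hence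
`(q₁ − D_{1,1}) goettschePoly n = (n + 1) · goettschePoly (n + 1)`; on the coefficient of a monomial
`q^μ` this reduces to `∑ᵢ i · μᵢ = n + 1`. Iterating from `goettschePoly 0 = 1` gives the formula. -/

lemma Multiset.weight_toFinsupp {σ M : Type*} [DecidableEq σ] [AddCommMonoid M] (w : σ → M)
    (s : Multiset σ) : Finsupp.weight w (Multiset.toFinsupp s) = (s.map w).sum := by
  induction s using Multiset.induction with
  | empty => simp
  | cons a s ih =>
    rw [← singleton_add, toFinsupp_add, _root_.map_add, ih, toFinsupp_singleton,
      Finsupp.weight_single, one_smul, map_add, sum_add, map_singleton, sum_singleton]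

lemma Finsupp.exists_eq_add_single_of_mem_support {σ : Type*} {μ : σ →₀ ℕ} {i : σ}
    (h : i ∈ μ.support) : ∃ ν, μ = ν + single i 1 :=
  ⟨μ - single i 1, (tsub_add_cancel_of_le (single_le_iff.mpr
    (Nat.one_le_iff_ne_zero.mpr (mem_support_iff.mp h)))).symm⟩

namespace Nat.Partition

variable {n : ℕ}

def pnatParts (P : n.Partition) : Multiset ℕ+ := P.parts.map Nat.toPNat'

lemma map_coe_pnatParts (P : n.Partition) : (pnatParts P).map (↑) = P.parts := by
  rw [pnatParts, Multiset.map_map]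
  exact (Multiset.map_congr rfl fun i hi => PNat.toPNat'_coe (P.parts_pos hi)).trans P.parts.map_id

def countFinsupp (P : n.Partition) : ℕ+ →₀ ℕ := Multiset.toFinsupp (pnatParts P)

lemma countFinsupp_apply (P : n.Partition) (i : ℕ+) :
    countFinsupp P i = P.parts.count (i : ℕ) := by
  rw [countFinsupp, Multiset.toFinsupp_apply, ← map_coe_pnatParts,
    Multiset.count_map_eq_count' _ _ PNat.coe_injective]

lemma weight_countFinsupp (P : n.Partition) : Finsupp.weight PNat.val (countFinsupp P) = n := by
  rw [countFinsupp, Multiset.weight_toFinsupp, map_coe_pnatParts, P.parts_sum]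

lemma countFinsupp_injective : Function.Injective (countFinsupp (n := n)) := by
  intro P Q h
  ext1
  rw [← map_coe_pnatParts P, ← map_coe_pnatParts Q,
    Multiset.toFinsupp.injective h]

lemma exists_countFinsupp_eq {μ : ℕ+ →₀ ℕ} (hμ : Finsupp.weight PNat.val μ = n) :
    ∃ P : n.Partition, countFinsupp P = μ := by
  let P : n.Partition :=
    { parts := μ.toMultiset.map (↑)
      parts_pos := by simp
      parts_sum := by rw [← hμ, ← Multiset.weight_toFinsupp, Finsupp.toMultiset_toFinsupp] }
  have hP : pnatParts P = μ.toMultiset :=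
    Multiset.map_injective PNat.coe_injective (map_coe_pnatParts P)
  exact ⟨P, by rw [countFinsupp, hP, Finsupp.toMultiset_toFinsupp]⟩

lemma prod_Icc_count_eq_prod_countFinsupp {M : Type*} [CommMonoid M] (P : n.Partition)
    (g : ℕ → ℕ → M) (hg : ∀ i, g i 0 = 1) :
    ∏ i ∈ Finset.Icc 1 n, g i (P.parts.count i) = (countFinsupp P).prod fun i m => g i m := by
  have hsupp : (countFinsupp P).support ⊆
      (Finset.Icc 1 n).preimage PNat.val PNat.coe_injective.injOn := by
    intro i hi
    rw [Finsupp.mem_support_iff, countFinsupp_apply, Multiset.count_ne_zero] at hi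
    simpa using ⟨i.pos, P.le_of_mem_parts hi⟩
  rw [Finsupp.prod_of_support_subset _ hsupp _ fun i _ => hg i]
  simp only [countFinsupp_apply]
  refine (Finset.prod_preimage _ _ _ (fun i => g i (P.parts.count i)) ?_).symm
  exact fun i hi hrange => absurd ⟨⟨i, (Finset.mem_Icc.mp hi).1⟩, rfl⟩ hrange

end Nat.Partition

namespace Goettsche

open Finsupp (weight single)
open scoped Nat

lemma q_coe (i : ℕ+) : q i = X i := dif_pos i.pos

lemma pd_coe (k : ℕ+) : pd k = (k : ℚ) • (pderiv k).toLinearMap := dif_pos k.pos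

lemma D_one_one_eq_sum_Icc (p : R) :
    D 1 1 p = ∑ k ∈ Finset.Icc 1 (bnd p), q (1 + k) * pd k p := by
  refine Finset.sum_nbij' (· 0) (fun k _ => k) (fun t ht => Fintype.mem_piFinset.mp ht 0)
    (fun k hk => Fintype.mem_piFinset.mpr fun _ => hk) (fun t _ => funext fun i => ?_)
    (fun _ _ => rfl) fun t _ => ?_
  · rw [Subsingleton.elim i 0]
  · simp [mulQ, List.ofFn_succ]

lemma D_one_one_eq_sum_vars (p : R) :
    D 1 1 p = ∑ k ∈ p.vars, X (k + 1) * ((k : ℚ) • pderiv k p) := by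
  have hvars : p.vars ⊆ (Finset.Icc 1 (bnd p)).preimage PNat.val PNat.coe_injective.injOn :=
    fun k hk => by simpa using ⟨k.pos, Finset.le_sup (f := PNat.val) hk⟩
  rw [D_one_one_eq_sum_Icc, ← Finset.sum_preimage PNat.val _ PNat.coe_injective.injOn _
    fun k hk hr => absurd ⟨⟨k, (Finset.mem_Icc.mp hk).1⟩, rfl⟩ hr]
  refine (Finset.sum_subset hvars fun k _ hk => ?_).symm.trans (Finset.sum_congr rfl fun k _ => ?_)
  · rw [pd_coe, LinearMap.smul_apply, Derivation.coeFn_coe, pderiv_eq_zero_of_notMem_vars hk,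
      smul_zero, mul_zero]
  · rw [pd_coe, add_comm, ← PNat.one_coe, ← PNat.add_coe, q_coe]
    rfl

lemma D_one_one_eq_sum (p : R) {s : Finset ℕ+} (hs : p.vars ⊆ s) :
    D 1 1 p = ∑ k ∈ s, X (k + 1) * ((k : ℚ) • pderiv k p) := by
  rw [D_one_one_eq_sum_vars]
  exact Finset.sum_subset hs fun k _ hk => by
    rw [pderiv_eq_zero_of_notMem_vars hk, smul_zero, mul_zero]

lemma D_one_one_smul (a : ℚ) (p : R) : D 1 1 (a • p) = a • D 1 1 p := by
  rw [D_one_one_eq_sum _ (Finset.subset_union_left (s₂ := p.vars)),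
    D_one_one_eq_sum _ (Finset.subset_union_right (s₁ := (a • p).vars)), Finset.smul_sum]
  simp only [Derivation.map_smul, mul_smul_comm, smul_comm a]

lemma weight_eq_add_sum_succ (μ : ℕ+ →₀ ℕ) {s : Finset ℕ+}
    (hs : ∀ k, k + 1 ∈ μ.support → k ∈ s) :
    weight PNat.val μ = μ 1 + ∑ k ∈ s, (k + 1 : ℕ) * μ (k + 1) := by
  have hone : (1 : ℕ+) ∉ s.image (· + 1) := by
    simp only [Finset.mem_image, not_exists, not_and]
    exact fun k _ h => by simpa using congrArg PNat.val h
  have hsupp : μ.support ⊆ insert 1 (s.image (· + 1)) := by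
    intro j hj
    rcases eq_or_ne j 1 with rfl | hj1
    · exact Finset.mem_insert_self _ _
    · obtain ⟨k, rfl⟩ := PNat.exists_eq_succ_of_ne_one hj1
      exact Finset.mem_insert_of_mem (Finset.mem_image_of_mem _ (hs k hj))
  rw [Finsupp.weight_apply,
    Finsupp.sum_of_support_subset μ hsupp (fun i c => c • (i : ℕ)) fun _ _ => zero_smul ℕ _,
    Finset.sum_insert hone, Finset.sum_image fun _ _ _ _ h => add_right_cancel h]
  simp only [smul_eq_mul, PNat.one_coe, PNat.add_coe, mul_comm, one_mul]

def logCoeff (i : ℕ) : ℚ := (-1) ^ (i - 1) / i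

lemma logCoeff_one : logCoeff 1 = 1 := by norm_num [logCoeff]

lemma succ_mul_logCoeff_succ {k : ℕ} (hk : 0 < k) :
    (k + 1 : ℚ) * logCoeff (k + 1) = -(k * logCoeff k) := by
  obtain ⟨j, rfl⟩ := Nat.exists_eq_add_of_lt hk
  simp only [logCoeff, Nat.add_sub_cancel, zero_add, pow_succ]
  field_simp
  push_cast
  ring

def expCoeff (μ : ℕ+ →₀ ℕ) : ℚ := μ.prod fun i m => 1 / (m ! : ℚ) * logCoeff i ^ m

lemma succ_mul_expCoeff_add_single (ν : ℕ+ →₀ ℕ) (i : ℕ+) :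
    (ν i + 1 : ℚ) * expCoeff (ν + single i 1) = logCoeff i * expCoeff ν := by
  have hg : ∀ j : ℕ+, 1 / ((0 : ℕ) ! : ℚ) * logCoeff j ^ 0 = 1 := by simp
  rw [expCoeff, expCoeff, ← Finsupp.mul_prod_erase' _ i _ hg, ← Finsupp.mul_prod_erase' ν i _ hg,
    Finsupp.erase_add, Finsupp.erase_single, add_zero]
  simp only [Finsupp.add_apply, Finsupp.single_eq_same, Nat.factorial_succ, pow_succ]
  push_cast
  field_simp

def goettschePoly (n : ℕ) : R :=
  ∑ P : n.Partition, monomial P.countFinsupp (expCoeff P.countFinsupp)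

lemma coeff_goettschePoly (n : ℕ) (μ : ℕ+ →₀ ℕ) :
    coeff μ (goettschePoly n) = if weight PNat.val μ = n then expCoeff μ else 0 := by
  simp only [goettschePoly, coeff_sum, coeff_monomial]
  split_ifs with hμ
  · obtain ⟨P₀, rfl⟩ := Nat.Partition.exists_countFinsupp_eq hμ
    simp only [Nat.Partition.countFinsupp_injective.eq_iff, Finset.sum_ite_eq',
      Finset.mem_univ, if_true]
  · refine Finset.sum_eq_zero fun P _ => if_neg ?_
    rintro rfl
    exact hμ P.weight_countFinsupp

lemma succ_mul_coeff_goettschePoly_add_single (n : ℕ) (ν : ℕ+ →₀ ℕ) (i : ℕ+) :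
    (ν i + 1 : ℚ) * coeff (ν + single i 1) (goettschePoly n)
      = logCoeff i * if weight PNat.val ν + i = n then expCoeff ν else 0 := by
  rw [coeff_goettschePoly, map_add, Finsupp.weight_single, smul_eq_mul, one_mul]
  split_ifs
  · exact succ_mul_expCoeff_add_single ν i
  · rw [mul_zero, mul_zero]

lemma coeff_q_one_mul_goettschePoly (n : ℕ) (μ : ℕ+ →₀ ℕ) :
    coeff μ (q 1 * goettschePoly n) = μ 1 * coeff μ (goettschePoly (n + 1)) := by
  rw [← PNat.one_coe, q_coe, coeff_X_mul']
  split_ifs with h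
  · obtain ⟨ν, rfl⟩ := Finsupp.exists_eq_add_single_of_mem_support h
    rw [add_tsub_cancel_right, Finsupp.add_apply, Finsupp.single_eq_same, Nat.cast_add,
      Nat.cast_one, succ_mul_coeff_goettschePoly_add_single, PNat.one_coe, logCoeff_one, one_mul,
      coeff_goettschePoly]
    simp only [Nat.add_right_cancel_iff]
  · rw [Finsupp.notMem_support_iff.mp h, Nat.cast_zero, zero_mul]

lemma coeff_X_succ_mul_pderiv_goettschePoly (n : ℕ) (μ : ℕ+ →₀ ℕ) (k : ℕ+) :
    coeff μ (X (k + 1) * ((k : ℚ) • pderiv k (goettschePoly n)))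
      = -((k + 1 : ℕ) * μ (k + 1) : ℚ) * coeff μ (goettschePoly (n + 1)) := by
  rw [coeff_X_mul']
  split_ifs with h
  · obtain ⟨ν, rfl⟩ := Finsupp.exists_eq_add_single_of_mem_support h
    have hA := succ_mul_coeff_goettschePoly_add_single n ν k
    have hB := succ_mul_coeff_goettschePoly_add_single (n + 1) ν (k + 1)
    simp only [PNat.add_coe, PNat.one_coe, ← add_assoc, Nat.add_right_cancel_iff] at hB
    rw [add_tsub_cancel_right, coeff_smul, coeff_pderiv, smul_eq_mul, Finsupp.add_apply,
      Finsupp.single_eq_same]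
    push_cast
    linear_combination (k : ℚ) * hA + ((k : ℚ) + 1) * hB
      + (if weight PNat.val ν + k = n then expCoeff ν else 0) * succ_mul_logCoeff_succ k.pos
  · rw [Finsupp.notMem_support_iff.mp h, Nat.cast_zero, mul_zero, neg_zero, zero_mul]

lemma weight_mul_coeff_goettschePoly (n : ℕ) (μ : ℕ+ →₀ ℕ) :
    (weight PNat.val μ : ℚ) * coeff μ (goettschePoly n) = n * coeff μ (goettschePoly n) := by
  rw [coeff_goettschePoly]
  split_ifs with h
  · rw [h]
  · rw [mul_zero, mul_zero]

lemma q_one_mul_sub_D_goettschePoly (n : ℕ) :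
    q 1 * goettschePoly n - D 1 1 (goettschePoly n) = ((n : ℚ) + 1) • goettschePoly (n + 1) := by
  ext μ
  -- `s` must contain the variables of `goettschePoly n`, to expand `D 1 1`, and every `k` with
  -- `q_{k+1}` dividing `q^μ`, to recover the weight of `μ`.
  let s := (goettschePoly n).vars ∪ μ.support.preimage (· + 1) (add_left_injective 1).injOn
  have hs : ∀ k, k + 1 ∈ μ.support → k ∈ s :=
    fun k hk => Finset.mem_union_right _ (Finset.mem_preimage.mpr hk)
  have hweight := weight_mul_coeff_goettschePoly (n + 1) μ
  rw [weight_eq_add_sum_succ μ hs] at hweight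
  rw [coeff_sub, coeff_q_one_mul_goettschePoly, D_one_one_eq_sum _ Finset.subset_union_left,
    coeff_sum, Finset.sum_congr rfl fun k _ => coeff_X_succ_mul_pderiv_goettschePoly n μ k,
    ← Finset.sum_mul, coeff_smul, smul_eq_mul]
  push_cast at hweight ⊢
  rw [Finset.sum_neg_distrib]
  linear_combination hweight

lemma goettschePoly_zero : goettschePoly 0 = 1 := by
  simp [goettschePoly, Nat.Partition.countFinsupp, Nat.Partition.pnatParts, expCoeff]

lemma iterate_q_one_mul_sub_D (n : ℕ) :
    (fun p : R => q 1 * p - D 1 1 p)^[n] 1 = (n ! : ℚ) • goettschePoly n := by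
  induction n with
  | zero => rw [Function.iterate_zero_apply, goettschePoly_zero, Nat.factorial_zero,
      Nat.cast_one, one_smul]
  | succ n ih =>
    rw [Function.iterate_succ_apply', ih, D_one_one_smul, mul_smul_comm, ← smul_sub,
      q_one_mul_sub_D_goettschePoly, smul_smul, Nat.factorial_succ]
    push_cast
    ring_nf

lemma goettschePoly_eq_sum (n : ℕ) :
    goettschePoly n = ∑ P : n.Partition,
      (∏ i ∈ Finset.Icc 1 n, (1 : ℚ) / (P.parts.count i)! * logCoeff i ^ P.parts.count i) •
        ∏ i ∈ Finset.Icc 1 n, q i ^ P.parts.count i := by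
  refine Finset.sum_congr rfl fun P _ => ?_
  rw [P.prod_Icc_count_eq_prod_countFinsupp (fun i m => (1 : ℚ) / m ! * logCoeff i ^ m) (by simp),
    P.prod_Icc_count_eq_prod_countFinsupp (fun i m => q i ^ m) (by simp), monomial_eq, C_mul',
    expCoeff]
  simp only [q_coe]

end Goettsche

/-- Göttsche's formula in the Fock model. -/
theorem goettsche_formula_fock (n : ℕ) :
    (fun p : R => q 1 * p - D 1 1 p)^[n] 1
      = (n.factorial : ℚ) • ∑ P : Nat.Partition n,
          (∏ i ∈ Finset.Icc 1 n,
              (1 : ℚ) / (Nat.factorial (Multiset.count i P.parts))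
                * (((-1 : ℚ) ^ (i - 1)) / (i : ℚ)) ^ (Multiset.count i P.parts)) •
            ∏ i ∈ Finset.Icc 1 n, q i ^ (Multiset.count i P.parts) := by
  rw [Goettsche.iterate_q_one_mul_sub_D, Goettsche.goettschePoly_eq_sum]
  rfl

end
end

section
/- Generation of the cohomology of Hilb^n(𝔸²) by tautological Chern classes, in the Fock-space model: for every n ≥ 1, the smallest ℚ-linear subspace of R that contains q_1^n and is stable under the operator D_{0,m} for every m with 2 ≤ m ≤ n equals the weight-n homogeneous component R_n of R. -/
/- Generation of the cohomology of `Hilb^n(𝔸²)` by tautological Chern classes,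
in the Fock model `R = ℚ[q₁,q₂,…]` (variables `qᵢ` of weight `i`): the smallest
`ℚ`-subspace containing `q₁ⁿ` and stable under
`D_{0,m} = Σ_{n₁,…,n_m ≥ 1} q_{n₁+⋯+n_m}·∂_{n₁}⋯∂_{n_m}` for `2 ≤ m ≤ n`
is the weight-`n` homogeneous component of `R`, i.e. the span of the monomials
`Π qᵢ^{λᵢ}` with `Σ i·λᵢ = n`. -/

open MvPolynomial

noncomputable section

/-! A monomial `Π qᵢ^{dᵢ}` is the partition `d` with `dᵢ` parts equal to `i`; its weight is the
size of `d`. On monomials, the `t`-summand of `D_{0,m}` merges the parts `t₁, …, t_m` of `d` into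
the single part `t₁ + ⋯ + t_m`, up to a nonzero scalar, and vanishes if `d` has no such parts.
Merging preserves size, so `D_{0,m}` preserves `R_n`. Conversely, if the largest part `A` of `d`
is at least `2`, split it into `A` ones: `D_{0,A}` of the result is a nonzero multiple of `d`
(merging those ones back) plus partitions with as many parts as `d` and a largest part `> A`.
Descending induction on the number of parts, then on the largest part, reaches every partition
of `n` from `(1ⁿ)`, i.e. from `q₁ⁿ`. -/

lemma Finsupp.single_one_add_le_iff {ι : Type*} {i : ι} {a d : ι →₀ ℕ} :
    single i 1 + a ≤ d ↔ a ≤ d ∧ (d - a) i ≠ 0 := by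
  rw [← Nat.one_le_iff_ne_zero, ← single_le_iff]
  constructor
  · intro h
    exact ⟨le_add_self.trans h, le_tsub_of_add_le_right h⟩
  · rintro ⟨ha, hi⟩
    exact (le_tsub_iff_right ha).mp hi

lemma Fin.sum_pos_of_pos {m : ℕ} (hm : 0 < m) {t : Fin m → ℕ} (ht : ∀ i, 0 < t i) :
    0 < ∑ i, t i :=
  Finset.sum_pos (fun i _ => ht i) (Finset.univ_nonempty_iff.mpr ⟨⟨0, hm⟩⟩)

lemma Fin.lt_sum_of_ne_const_one {m : ℕ} {t : Fin m → ℕ} (ht : ∀ i, 0 < t i)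
    (h1 : t ≠ fun _ => 1) : m < ∑ i, t i := by
  obtain ⟨j, hj⟩ := Function.ne_iff.mp h1
  calc m = ∑ _i : Fin m, 1 := by simp
    _ < ∑ i, t i := Finset.sum_lt_sum (fun i _ => ht i)
        ⟨j, Finset.mem_univ j, by have := ht j; omega⟩

lemma Nat.toPNat'_eq_mk {m : ℕ} (hm : 0 < m) : m.toPNat' = ⟨m, hm⟩ :=
  PNat.eq (PNat.toPNat'_coe hm)

lemma Submodule.mem_of_sum_mem_of_forall_ne {ι S M : Type*} [Ring S] [AddCommGroup M]
    [Module S M] {V : Submodule S M} {T : Finset ι} {f : ι → M} (hT : ∑ t ∈ T, f t ∈ V)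
    {t₀ : ι} (ht₀ : t₀ ∈ T) (hf : ∀ t ∈ T, t ≠ t₀ → f t ∈ V) : f t₀ ∈ V := by
  classical
  rw [← Finset.add_sum_erase T f ht₀] at hT
  exact (Submodule.add_mem_iff_left V (Submodule.sum_mem V fun t ht =>
    hf t (Finset.mem_of_mem_erase ht) (Finset.ne_of_mem_erase ht))).mp hT

namespace Fock

open Finsupp

lemma sum_val_mul_eq_weight (d : ℕ+ →₀ ℕ) :
    (d.sum fun i k => (i : ℕ) * k) = d.weight PNat.val := by
  simp only [weight_apply, smul_eq_mul, mul_comm]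

def maxPart (d : ℕ+ →₀ ℕ) : ℕ := d.support.sup PNat.val

lemma le_maxPart {d : ℕ+ →₀ ℕ} {i : ℕ+} (hi : i ∈ d.support) :
    (i : ℕ) ≤ maxPart d :=
  Finset.le_sup (f := PNat.val) hi

lemma maxPart_le_weight (d : ℕ+ →₀ ℕ) : maxPart d ≤ d.weight PNat.val :=
  Finset.sup_le fun _ hi => le_weight_of_ne_zero' _ (mem_support_iff.mp hi)

lemma degree_le_weight (d : ℕ+ →₀ ℕ) : d.degree ≤ d.weight PNat.val := by
  rw [degree_apply, weight_apply, Finsupp.sum]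
  exact Finset.sum_le_sum fun i _ => Nat.le_mul_of_pos_right _ i.pos

lemma eq_single_one_of_maxPart_le_one {d : ℕ+ →₀ ℕ} (h : maxPart d ≤ 1) :
    d = single 1 (d.weight PNat.val) := by
  have hd : d = single 1 (d 1) := support_subset_singleton.mp fun i hi =>
    Finset.mem_singleton.mpr (PNat.eq (((le_maxPart hi).trans h).antisymm i.pos))
  conv_rhs => rw [hd, weight_single]
  simpa using hd

lemma bnd_monomial (d : ℕ+ →₀ ℕ) : bnd (monomial d (1 : ℚ)) = maxPart d := by
  rw [bnd, vars_monomial one_ne_zero]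
  rfl

lemma q_eq_X {k : ℕ} (hk : 0 < k) : q k = X k.toPNat' := by
  rw [q, dif_pos hk, Nat.toPNat'_eq_mk hk]

lemma q_one : q 1 = X 1 := q_eq_X one_pos

lemma mulQ_monomial {k : ℕ} (hk : 0 < k) (d : ℕ+ →₀ ℕ) (c : ℚ) :
    mulQ k (monomial d c) = monomial (single k.toPNat' 1 + d) c := by
  rw [mulQ, LinearMap.mulLeft_apply, q_eq_X hk, X, monomial_mul, one_mul]

lemma pd_eq {m : ℕ} (hm : 0 < m) :
    pd m = (m : ℚ) • (pderiv (R := ℚ) m.toPNat').toLinearMap := by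
  rw [pd, dif_pos hm, Nat.toPNat'_eq_mk hm]
  rfl

lemma pd_monomial {m : ℕ} (hm : 0 < m) (d : ℕ+ →₀ ℕ) (c : ℚ) :
    pd m (monomial d c) =
      ((m * d m.toPNat' : ℕ) : ℚ) • monomial (d - single m.toPNat' 1) c := by
  rw [pd_eq hm, LinearMap.smul_apply, Derivation.coeFn_coe, pderiv_monomial, smul_monomial,
    smul_monomial, smul_eq_mul, smul_eq_mul]
  push_cast
  ring_nf

def parts {m : ℕ} (t : Fin m → ℕ) : ℕ+ →₀ ℕ := ∑ i, single (t i).toPNat' 1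

lemma parts_succ {m : ℕ} (t : Fin (m + 1) → ℕ) :
    parts t = single (t 0).toPNat' 1 + parts (fun i => t i.succ) :=
  Fin.sum_univ_succ _

lemma prod_pd_monomial {m : ℕ} (t : Fin m → ℕ) (ht : ∀ i, 0 < t i) (d : ℕ+ →₀ ℕ) :
    ∃ c : ℚ, (List.ofFn fun i => pd (t i)).prod (monomial d 1) = c • monomial (d - parts t) 1 ∧
      (c ≠ 0 ↔ parts t ≤ d) := by
  induction m with
  | zero => exact ⟨1, by simp [parts], by simp [parts]⟩
  | succ m ih =>
    obtain ⟨c, hc, hc_ne⟩ := ih (fun i => t i.succ) (fun i => ht i.succ)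
    refine ⟨c * ((t 0 * (d - parts fun i => t i.succ) (t 0).toPNat' : ℕ) : ℚ), ?_, ?_⟩
    · rw [List.ofFn_succ, List.prod_cons, Module.End.mul_apply, hc, map_smul,
        pd_monomial (ht 0), smul_smul, tsub_tsub, add_comm (parts _), ← parts_succ]
    · rw [parts_succ, single_one_add_le_iff, ← hc_ne, mul_ne_zero_iff, Nat.cast_ne_zero,
        mul_ne_zero_iff, and_iff_right (ht 0).ne']

lemma weight_parts {m : ℕ} {t : Fin m → ℕ} (ht : ∀ i, 0 < t i) :
    (parts t).weight PNat.val = ∑ i, t i := by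
  simp only [parts, map_sum, weight_single, one_smul, PNat.toPNat'_coe (ht _)]

lemma degree_parts {m : ℕ} (t : Fin m → ℕ) : (parts t).degree = m := by
  simp [parts]

lemma parts_const_one (m : ℕ) : parts (fun _ : Fin m => 1) = single 1 m := by
  simp [parts]
  rfl

def merge {m : ℕ} (t : Fin m → ℕ) (e : ℕ+ →₀ ℕ) : ℕ+ →₀ ℕ :=
  single (∑ i, t i).toPNat' 1 + (e - parts t)

lemma weight_merge {m : ℕ} (hm : 0 < m) {t : Fin m → ℕ} (ht : ∀ i, 0 < t i)
    {e : ℕ+ →₀ ℕ} (he : parts t ≤ e) :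
    (merge t e).weight PNat.val = e.weight PNat.val := by
  have := congrArg (weight PNat.val) (tsub_add_cancel_of_le he)
  rw [map_add, weight_parts ht] at this
  rw [merge, map_add, weight_single, one_smul, PNat.toPNat'_coe (Fin.sum_pos_of_pos hm ht)]
  omega

lemma degree_merge {m : ℕ} (t : Fin m → ℕ) {e : ℕ+ →₀ ℕ} (he : parts t ≤ e) :
    (merge t e).degree + m = e.degree + 1 := by
  have := congrArg degree (tsub_add_cancel_of_le he)
  rw [map_add, degree_parts] at this
  rw [merge, map_add, degree_single]
  omega

lemma sum_le_maxPart_merge {m : ℕ} (hm : 0 < m) {t : Fin m → ℕ} (ht : ∀ i, 0 < t i)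
    (e : ℕ+ →₀ ℕ) : ∑ i, t i ≤ maxPart (merge t e) := by
  have hmem : (∑ i, t i).toPNat' ∈ (merge t e).support := by
    simp [merge]
  simpa [PNat.toPNat'_coe (Fin.sum_pos_of_pos hm ht)] using le_maxPart hmem

lemma summand_monomial {m : ℕ} (hm : 0 < m) (t : Fin m → ℕ) (ht : ∀ i, 0 < t i)
    (e : ℕ+ →₀ ℕ) : ∃ c : ℚ,
      (mulQ (0 + ∑ i, t i) * (List.ofFn fun i => pd (t i)).prod) (monomial e 1) =
        c • monomial (merge t e) 1 ∧ (c ≠ 0 ↔ parts t ≤ e) := by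
  obtain ⟨c, hc, hc_ne⟩ := prod_pd_monomial t ht e
  refine ⟨c, ?_, hc_ne⟩
  rw [Module.End.mul_apply, hc, map_smul, zero_add, mulQ_monomial (Fin.sum_pos_of_pos hm ht),
    merge]

def weightSpace (n : ℕ) : Submodule ℚ R :=
  Submodule.span ℚ {p | ∃ d : ℕ+ →₀ ℕ, d.weight PNat.val = n ∧ p = monomial d 1}

lemma q_one_pow_mem_weightSpace (n : ℕ) : q 1 ^ n ∈ weightSpace n :=
  Submodule.subset_span ⟨single 1 n, by simp [weight_single], by rw [q_one, X_pow_eq_monomial]⟩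

lemma pos_of_mem_piFinset_Icc {m N : ℕ} {t : Fin m → ℕ}
    (ht : t ∈ Fintype.piFinset fun _ => Finset.Icc 1 N) (i : Fin m) : 0 < t i :=
  (Finset.mem_Icc.mp (Fintype.mem_piFinset.mp ht i)).1

lemma D_mem_weightSpace {n m : ℕ} (hm : 0 < m) {p : R} (hp : p ∈ weightSpace n) :
    D 0 m p ∈ weightSpace n := by
  refine Submodule.sum_mem _ fun t htT => ?_
  have ht := pos_of_mem_piFinset_Icc htT
  suffices weightSpace n ≤ (weightSpace n).comap
      (mulQ (0 + ∑ i, t i) * (List.ofFn fun i => pd (t i)).prod) from this hp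
  refine Submodule.span_le.mpr ?_
  rintro _ ⟨e, rfl, rfl⟩
  obtain ⟨c, hc, hc_ne⟩ := summand_monomial hm t ht e
  rw [SetLike.mem_coe, Submodule.mem_comap, hc]
  by_cases he : parts t ≤ e
  · exact Submodule.smul_mem _ _ (Submodule.subset_span ⟨_, weight_merge hm ht he, rfl⟩)
  · rw [of_not_not (mt hc_ne.mp he), zero_smul]
    exact Submodule.zero_mem _

def split (d : ℕ+ →₀ ℕ) (A : ℕ+) : ℕ+ →₀ ℕ := d - single A 1 + single 1 (A : ℕ)

lemma weight_split {d : ℕ+ →₀ ℕ} {A : ℕ+} (hA : A ∈ d.support) :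
    (split d A).weight PNat.val = d.weight PNat.val := by
  rw [split, map_add, weight_single, smul_eq_mul, PNat.one_coe, mul_one,
    weight_sub_single_add (mem_support_iff.mp hA)]

lemma degree_split {d : ℕ+ →₀ ℕ} {A : ℕ+} (hA : A ∈ d.support) :
    (split d A).degree + 1 = d.degree + A := by
  have := congrArg degree (sub_add_single_one_cancel (mem_support_iff.mp hA))
  rw [map_add, degree_single] at this
  rw [split, map_add, degree_single]
  omega

lemma single_one_le_split (d : ℕ+ →₀ ℕ) (A : ℕ+) : single 1 (A : ℕ) ≤ split d A :=
  le_add_self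

lemma merge_const_one_split {d : ℕ+ →₀ ℕ} {A : ℕ+} (hA : A ∈ d.support) :
    merge (fun _ : Fin A => 1) (split d A) = d := by
  rw [merge, parts_const_one, split, add_tsub_cancel_right]
  simpa [add_comm] using sub_add_single_one_cancel (mem_support_iff.mp hA)

lemma monomial_mem_of_split {V : Submodule ℚ R} {d : ℕ+ →₀ ℕ} {A : ℕ+} (hA : A ∈ d.support)
    (hV : ∀ p ∈ V, D 0 A p ∈ V) (hsplit : monomial (split d A) (1 : ℚ) ∈ V)
    (hmerge : ∀ ν : ℕ+ →₀ ℕ, ν.weight PNat.val = d.weight PNat.val → ν.degree = d.degree →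
      (A : ℕ) < maxPart ν → monomial ν (1 : ℚ) ∈ V) :
    monomial d (1 : ℚ) ∈ V := by
  have hdeg := degree_split hA
  set e := split d A
  have hone_le : single 1 (A : ℕ) ≤ e := single_one_le_split d A
  have hones : (fun _ => 1 : Fin A → ℕ) ∈
      Fintype.piFinset fun _ => Finset.Icc 1 (bnd (monomial e (1 : ℚ))) := by
    refine Fintype.mem_piFinset.mpr fun _ => Finset.mem_Icc.mpr ⟨le_rfl, ?_⟩
    rw [bnd_monomial]
    refine le_maxPart (d := e) (i := 1) (mem_support_iff.mpr ?_)
    have := single_le_iff.mp hone_le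
    have := A.pos
    omega
  obtain ⟨c₀, hc₀, hc₀ne⟩ := summand_monomial A.pos (fun _ => 1) (fun _ => one_pos) e
  rw [merge_const_one_split hA] at hc₀
  rw [parts_const_one] at hc₀ne
  have hd := Submodule.mem_of_sum_mem_of_forall_ne (hV _ hsplit) hones fun t htT ht1 => ?_
  · rw [hc₀] at hd
    exact (Submodule.smul_mem_iff V (hc₀ne.mpr hone_le)).mp hd
  have ht := pos_of_mem_piFinset_Icc htT
  obtain ⟨c, hc, hc_ne⟩ := summand_monomial A.pos t ht e
  rw [hc]
  by_cases he : parts t ≤ e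
  · refine Submodule.smul_mem _ _ (hmerge _ ?_ ?_ ?_)
    · rw [weight_merge A.pos ht he, weight_split hA]
    · have := degree_merge t he
      omega
    · exact (Fin.lt_sum_of_ne_const_one ht ht1).trans_le
        (sum_le_maxPart_merge A.pos ht e)
  · rw [of_not_not (mt hc_ne.mp he), zero_smul]
    exact Submodule.zero_mem _

lemma monomial_mem_of_stable {n : ℕ} {V : Submodule ℚ R} (h1 : q 1 ^ n ∈ V)
    (hV : ∀ m : ℕ, 2 ≤ m → m ≤ n → ∀ p ∈ V, D 0 m p ∈ V) (d : ℕ+ →₀ ℕ)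
    (hd : d.weight PNat.val = n) : monomial d (1 : ℚ) ∈ V := by
  by_cases hmax : maxPart d ≤ 1
  · rwa [eq_single_one_of_maxPart_le_one hmax, hd, ← X_pow_eq_monomial, ← q_one]
  have hne : d.support.Nonempty :=
    Finset.nonempty_iff_ne_empty.mpr fun h => hmax (by simp [maxPart, h])
  obtain ⟨A, hA, hAd⟩ : ∃ A ∈ d.support, maxPart d = A := Finset.exists_mem_eq_sup _ hne _
  have hA2 : 2 ≤ (A : ℕ) := by omega
  have hAn : (A : ℕ) ≤ n := by have := maxPart_le_weight d; omega
  exact monomial_mem_of_split hA (hV A hA2 hAn)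
    (monomial_mem_of_stable h1 hV (split d A) ((weight_split hA).trans hd))
    fun ν hνw hνdeg hνmax => monomial_mem_of_stable h1 hV ν (hνw.trans hd)
termination_by (n - d.degree, n - maxPart d)
decreasing_by
  · have := degree_split hA
    have := degree_le_weight (split d A)
    rw [weight_split hA] at this
    exact Prod.Lex.left _ _ (by omega)
  · have := maxPart_le_weight ν
    rw [hνdeg]
    exact Prod.Lex.right _ (by omega)

end Fock

theorem tautological_generation_general (n : ℕ) :
    sInf {V : Submodule ℚ R | q 1 ^ n ∈ V ∧
        ∀ m : ℕ, 2 ≤ m → m ≤ n → ∀ p ∈ V, D 0 m p ∈ V}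
      = Submodule.span ℚ {p : R | ∃ d : ℕ+ →₀ ℕ,
          (d.sum fun i k => (i : ℕ) * k) = n ∧ p = monomial d 1} := by
  simp only [Fock.sum_val_mul_eq_weight]
  change _ = Fock.weightSpace n
  refine le_antisymm (sInf_le ⟨Fock.q_one_pow_mem_weightSpace n,
    fun m hm _ p hp => Fock.D_mem_weightSpace (by omega) hp⟩) ?_
  refine le_sInf fun V ⟨h1, hV⟩ => Submodule.span_le.mpr ?_
  rintro _ ⟨d, hd, rfl⟩
  exact Fock.monomial_mem_of_stable h1 hV d hd

/-- The tautological Chern classes generate the cohomology of `Hilb^n(𝔸²)`. -/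
theorem tautological_generation (n : ℕ) (hn : 1 ≤ n) :
    sInf {V : Submodule ℚ R | q 1 ^ n ∈ V ∧
        ∀ m : ℕ, 2 ≤ m → m ≤ n → ∀ p ∈ V, D 0 m p ∈ V}
      = Submodule.span ℚ {p : R | ∃ d : ℕ+ →₀ ℕ,
          (d.sum fun i k => (i : ℕ) * k) = n ∧ p = monomial d 1} :=
  tautological_generation_general n

end
end
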